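/- (Johnson-type bound for light codes) L(W,n,w) ≤ ⌊(n/w)·L(W,n−1,w−1)⌋, where L(W,n,w) is the maximum number of vertices of the Johnson graph J(n,w) that can be made W-light under a single orientation. -/

import Mathlib

def weight {n : ℕ} (B : Fin n → Bool) : ℕ :=
  (Finset.univ.filter (fun i => B i = true)).card

def hamming {n : ℕ} (B B' : Fin n → Bool) : ℕ :=
  (Finset.univ.filter (fun i => B i ≠ B' i)).card

theorem hamming_comm {n : ℕ} (B B' : Fin n → Bool) : hamming B B' = hamming B' B := by
  unfold hamming; congr 1; ext i; simp [ne_comm]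

def johnson (n w : ℕ) : SimpleGraph {B : Fin n → Bool // weight B = w} where
  Adj B B' := hamming B.1 B'.1 = 2
  symm := ⟨fun B B' h => (hamming_comm _ _).trans h⟩
  loopless := ⟨fun B h => by simp [hamming] at h⟩

structure GraphOrientation {V : Type*} (G : SimpleGraph V) where
  dir : V → V → Prop
  dir_adj : ∀ u v, dir u v → G.Adj u v
  total : ∀ u v, G.Adj u v → dir u v ∨ dir v u
  asymm : ∀ u v, dir u v → ¬ dir v u

noncomputable def outdeg {V : Type*} {G : SimpleGraph V} (Λ : GraphOrientation G) (v : V) : ℕ :=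
  {u | Λ.dir v u}.ncard

noncomputable def Lmax (W n w : ℕ) : ℕ :=
  sSup {k | ∃ Λ : GraphOrientation (johnson n w), k = {B | outdeg Λ B ≤ W}.ncard}

/-! The words of `J(n, w)` with a fixed coordinate `i` equal to `1` form a copy of
`J(n - 1, w - 1)`, so by restricting the orientation at most `L(W, n - 1, w - 1)` light words
have a `1` at `i`. Each word has `w` ones, so summing over the `n` coordinates counts every light
word `w` times: `w · L(W, n, w) ≤ n · L(W, n - 1, w - 1)`. -/

open Finset

namespace GraphOrientation

variable {V V' : Type*} {G : SimpleGraph V} {G' : SimpleGraph V'}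

def comap (f : G' →g G) (Λ : GraphOrientation G) : GraphOrientation G' where
  dir u v := G'.Adj u v ∧ Λ.dir (f u) (f v)
  dir_adj _ _ h := h.1
  total _ _ h := (Λ.total _ _ (f.map_adj h)).imp (⟨h, ·⟩) (⟨h.symm, ·⟩)
  asymm _ _ h h' := Λ.asymm _ _ h.2 h'.2

lemma outdeg_comap_le [Finite V] (f : G' →g G) (hf : Function.Injective f)
    (Λ : GraphOrientation G) (u : V') : outdeg (Λ.comap f) u ≤ outdeg Λ (f u) := by
  unfold outdeg
  rw [← Set.ncard_image_of_injective _ hf]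
  exact Set.ncard_le_ncard (by rintro _ ⟨x, hx, rfl⟩; exact hx.2) (Set.toFinite _)

lemma ncard_preimage_light_le [Finite V] (f : G' →g G) (hf : Function.Injective f)
    (Λ : GraphOrientation G) (W : ℕ) :
    (f ⁻¹' {v | outdeg Λ v ≤ W}).ncard ≤ {u | outdeg (Λ.comap f) u ≤ W}.ncard :=
  have : Finite V' := Finite.of_injective f hf
  Set.ncard_le_ncard (fun u hu => (outdeg_comap_le f hf Λ u).trans hu) (Set.toFinite _)

end GraphOrientation

lemma ncard_light_le_Lmax (W n w : ℕ) (Λ : GraphOrientation (johnson n w)) :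
    {B | outdeg Λ B ≤ W}.ncard ≤ Lmax W n w := by
  refine le_csSup ⟨Nat.card {B : Fin n → Bool // weight B = w}, ?_⟩ ⟨Λ, rfl⟩
  rintro _ ⟨Λ, rfl⟩
  exact Set.ncard_le_card _

lemma weight_eq_sum {n : ℕ} (B : Fin n → Bool) :
    weight B = ∑ j, if B j = true then 1 else 0 :=
  card_filter _ _

lemma weight_insertNth_true {m : ℕ} (i : Fin (m + 1)) (C : Fin m → Bool) :
    weight (i.insertNth true C) = weight C + 1 := by
  rw [weight_eq_sum, weight_eq_sum, Fin.sum_univ_succAbove _ i]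
  simp [add_comm]

lemma hamming_insertNth {m : ℕ} (i : Fin (m + 1)) (b : Bool) (C C' : Fin m → Bool) :
    hamming (i.insertNth b C) (i.insertNth b C') = hamming C C' := by
  unfold hamming
  rw [card_filter, card_filter, Fin.sum_univ_succAbove _ i]
  simp

def johnsonInsert {m v : ℕ} (i : Fin (m + 1)) : johnson m v →g johnson (m + 1) (v + 1) where
  toFun C := ⟨i.insertNth true C.1, by rw [weight_insertNth_true, C.2]⟩
  map_rel' h := (hamming_insertNth i true _ _).trans h

@[simp]
lemma coe_johnsonInsert {m v : ℕ} (i : Fin (m + 1)) (C : {C : Fin m → Bool // weight C = v}) :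
    (johnsonInsert i C).1 = i.insertNth true C.1 :=
  rfl

lemma johnsonInsert_injective {m v : ℕ} (i : Fin (m + 1)) :
    Function.Injective (johnsonInsert (v := v) i) := fun C C' h =>
  Subtype.ext <| by simpa using congrArg Subtype.val h

lemma range_johnsonInsert {m v : ℕ} (i : Fin (m + 1)) :
    Set.range (johnsonInsert (v := v) i) = {B | B.1 i = true} := by
  ext B
  refine ⟨by rintro ⟨C, rfl⟩; simp, fun hB => ?_⟩
  have hrec : i.insertNth true (i.removeNth B.1) = B.1 := by
    rw [← hB, Fin.insertNth_self_removeNth]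
  have hw : weight (i.removeNth B.1) = v := by
    have := B.2
    rw [← hrec, weight_insertNth_true] at this
    omega
  exact ⟨⟨_, hw⟩, Subtype.ext hrec⟩

lemma ncard_light_coord_le_Lmax (W : ℕ) {n v : ℕ}
    (Λ : GraphOrientation (johnson n (v + 1))) (i : Fin n) :
    ({B | outdeg Λ B ≤ W} ∩ {B | B.1 i = true}).ncard ≤ Lmax W (n - 1) v := by
  obtain ⟨m, rfl⟩ := Nat.exists_eq_add_one_of_ne_zero i.pos.ne'
  rw [Nat.add_sub_cancel, ← range_johnsonInsert, ← Set.image_preimage_eq_inter_range,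
    Set.ncard_image_of_injective _ (johnsonInsert_injective i)]
  exact (Λ.ncard_preimage_light_le _ (johnsonInsert_injective i) W).trans
    (ncard_light_le_Lmax W m v _)

lemma sum_ncard_inter_coord {n w : ℕ} (S : Set {B : Fin n → Bool // weight B = w}) :
    ∑ i, (S ∩ {B | B.1 i = true}).ncard = S.ncard * w := by
  classical
  obtain ⟨S, rfl⟩ := (Set.toFinite S).exists_finset_coe
  have hcoord (i : Fin n) :
      ((S : Set {B : Fin n → Bool // weight B = w}) ∩ {B | B.1 i = true}).ncard =
        #{B ∈ S | B.1 i = true} := by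
    rw [← Set.ncard_coe_finset, coe_filter]
    rfl
  simp_rw [hcoord, Set.ncard_coe_finset, card_filter]
  rw [sum_comm, sum_congr rfl fun B _ => (weight_eq_sum B.1).symm.trans B.2, sum_const,
    smul_eq_mul]

theorem stmt10 (W n w : ℕ) (hw : 0 < w) :
    Lmax W n w ≤ n * Lmax W (n - 1) (w - 1) / w := by
  obtain ⟨v, rfl⟩ := Nat.exists_eq_add_one_of_ne_zero hw.ne'
  refine csSup_le' ?_
  rintro _ ⟨Λ, rfl⟩
  rw [Nat.le_div_iff_mul_le hw]
  calc {B | outdeg Λ B ≤ W}.ncard * (v + 1)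
      = ∑ i, ({B | outdeg Λ B ≤ W} ∩ {B | B.1 i = true}).ncard :=
        (sum_ncard_inter_coord _).symm
    _ ≤ ∑ _i : Fin n, Lmax W (n - 1) v := sum_le_sum fun i _ => ncard_light_coord_le_Lmax W Λ i
    _ = n * Lmax W (n - 1) v := by simp
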